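/- If f, g : Σ⁺ → ℂ with g Lipschitz for d_θ and f ∈ L²(μ), then |∫(f∘σⁿ)·g dμ − ∫f dμ · ∫g dμ| ≤ ‖f‖_{L²(μ)} · Lip_θ(g) · θⁿ for all n ≥ 1. -/

import Mathlib

/-!
On the cylinder `[w]` of a word of length `n` every point is `w y` with `y = σⁿ x`, and for a
Bernoulli measure `σⁿ` pushes `μ|[w]` forward to `μ[w] • μ`. This gives the transfer operator
identity `∫ (f ∘ σⁿ) g dμ = ∫ f · Lⁿg dμ` with `Lⁿg y = ∑_w μ[w] g (w y)`. Since `w y` and `w z` are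
`θⁿ`-close for `d_θ`, `Lⁿg` stays within `Lip(g) θⁿ` of its mean `∫ g dμ`; hence
`∫ (f ∘ σⁿ) g - ∫ f ∫ g = ∫ f (Lⁿg - ∫ g)` is at most `‖f‖₁ Lip(g) θⁿ ≤ ‖f‖₂ Lip(g) θⁿ`.
-/

open MeasureTheory Filter Set
open scoped ENNReal BigOperators Classical

/-- The metric `d_θ` on the shift space: `d_θ(x,ξ) = θ ^ (first index of disagreement)`,
so `d_θ(x,ξ) = 1` when `x 0 ≠ ξ 0`, and `d_θ(x,x) = 0`. -/
noncomputable def dtheta {m : ℕ} (θ : ℝ) (x ξ : ℕ → Fin m) : ℝ :=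
  if x = ξ then 0 else θ ^ sInf {n : ℕ | x n ≠ ξ n}

/-- The one-sided shift map. -/
def shift {A : Type*} (x : ℕ → A) : ℕ → A := fun n => x (n + 1)

/-- Concatenation of a finite word `α` with an infinite sequence `ξ`. -/
def concat {A : Type*} {n : ℕ} (α : Fin n → A) (ξ : ℕ → A) : ℕ → A :=
  fun j => if h : j < n then α ⟨j, h⟩ else ξ (j - n)

lemma integral_norm_le_sqrt_integral_norm_sq {Ω E : Type*} [MeasurableSpace Ω]
    [NormedAddCommGroup E] {μ : Measure Ω} [IsProbabilityMeasure μ] {f : Ω → E}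
    (hf : MemLp f 2 μ) : ∫ x, ‖f x‖ ∂μ ≤ √(∫ x, ‖f x‖ ^ 2 ∂μ) := by
  have hvar := ProbabilityTheory.variance_eq_sub hf.norm ▸
    ProbabilityTheory.variance_nonneg (fun x => ‖f x‖) μ
  exact (le_abs_self _).trans (Real.abs_le_sqrt (by simpa using hvar))

namespace ShiftSpace

variable {A : Type*}

def cyl {N : ℕ} (w : Fin N → A) : Set (ℕ → A) := {x | ∀ i : Fin N, x i = w i}

lemma shift_iterate_apply (n : ℕ) (x : ℕ → A) (j : ℕ) : shift^[n] x j = x (j + n) := by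
  induction n generalizing x with
  | zero => rfl
  | succ n ih =>
    rw [Function.iterate_succ_apply, ih]
    rfl

lemma concat_shift_iterate_of_mem_cyl {n : ℕ} {w : Fin n → A} {x : ℕ → A} (hx : x ∈ cyl w) :
    concat w (shift^[n] x) = x := by
  funext j
  by_cases hj : j < n
  · simp [concat, hj, hx ⟨j, hj⟩]
  · simp [concat, hj, shift_iterate_apply, Nat.sub_add_cancel (not_lt.1 hj)]

lemma mem_cyl_append {n N : ℕ} (w : Fin n → A) (v : Fin N → A) (x : ℕ → A) :
    x ∈ cyl (Fin.append w v) ↔ x ∈ cyl w ∧ shift^[n] x ∈ cyl v := by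
  simp only [cyl, mem_ofPred_eq, Fin.forall_fin_add, Fin.append_left, Fin.append_right,
    shift_iterate_apply, Fin.val_castAdd, Fin.val_natAdd, Nat.add_comm n]

lemma iUnion_cyl (N : ℕ) : ⋃ w : Fin N → A, cyl w = univ :=
  eq_univ_of_forall fun x => mem_iUnion.2 ⟨fun i => x i, fun _ => rfl⟩

lemma pairwise_disjoint_cyl (N : ℕ) :
    Pairwise (Function.onFun Disjoint (cyl : (Fin N → A) → Set (ℕ → A))) :=
  fun _ _ hwv => disjoint_left.2 fun _ hw hv => hwv (funext fun i => (hw i).symm.trans (hv i))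

lemma eq_iUnion_cyl_of_determined {C : Set (ℕ → A)} {N : ℕ}
    (hC : ∀ x y : ℕ → A, (∀ i < N, x i = y i) → x ∈ C → y ∈ C) :
    C = ⋃ (w : Fin N → A) (_ : cyl w ⊆ C), cyl w := by
  refine Subset.antisymm (fun x hx => ?_) (iUnion₂_subset fun _ h => h)
  refine mem_iUnion₂.2 ⟨fun i => x i, fun y hy => hC x y (fun i hi => (hy ⟨i, hi⟩).symm) hx, ?_⟩
  exact fun _ => rfl

section Measure

variable [MeasurableSpace A] {μ : Measure (ℕ → A)}
  {𝕜 : Type*} [RCLike 𝕜] {f g : (ℕ → A) → 𝕜} {C : ℝ}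

lemma measurable_shift : Measurable (shift : (ℕ → A) → ℕ → A) :=
  measurable_pi_iff.2 fun j => measurable_pi_apply (j + 1)

lemma measurable_concat {n : ℕ} (w : Fin n → A) : Measurable (concat w) := by
  refine measurable_pi_lambda _ fun j => ?_
  by_cases hj : j < n
  · simp only [concat, dif_pos hj]
    exact measurable_const
  · simp only [concat, dif_neg hj]
    exact measurable_pi_apply _

def IsBernoulli (μ : Measure (ℕ → A)) : Prop :=
  ∀ ⦃n N : ℕ⦄ (w : Fin n → A) (v : Fin N → A), μ (cyl (Fin.append w v)) = μ (cyl w) * μ (cyl v)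

lemma isBernoulli_of_measure_cyl_eq_pow {c : ℝ≥0∞}
    (h : ∀ N (w : Fin N → A), μ (cyl w) = c ^ N) : IsBernoulli μ :=
  fun n N w v => by rw [h, h, h, pow_add]

lemma integrable_mul_comp_concat (hf : Integrable f μ) (hg : Measurable g) (hgC : ∀ x, ‖g x‖ ≤ C)
    {n : ℕ} (w : Fin n → A) : Integrable (fun y => f y * g (concat w y)) μ :=
  hf.mul_bdd (hg.comp (measurable_concat w)).aestronglyMeasurable (ae_of_all _ fun _ => hgC _)

section Transfer

variable [Fintype A]

/-- For a Bernoulli measure `μ`, the `n`-th power of the transfer operator of the shift. -/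
noncomputable def transferPow (μ : Measure (ℕ → A)) (n : ℕ)
    (g : (ℕ → A) → 𝕜) (y : ℕ → A) : 𝕜 :=
  ∑ w : Fin n → A, μ.real (cyl w) • g (concat w y)

lemma integrable_mul_transferPow (hf : Integrable f μ) (hg : Measurable g) (hgC : ∀ x, ‖g x‖ ≤ C)
    (n : ℕ) : Integrable (fun y => f y * transferPow μ n g y) μ := by
  simp only [transferPow, Finset.mul_sum, mul_smul_comm]
  exact integrable_finsetSum _ fun w _ => (integrable_mul_comp_concat hf hg hgC w).fun_smul _

end Transfer

variable [MeasurableSingletonClass A]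

lemma measurableSet_cyl {N : ℕ} (w : Fin N → A) : MeasurableSet (cyl w) := by
  have hcyl : cyl w = ⋂ i : Fin N, (fun x : ℕ → A => x i) ⁻¹' {w i} := by
    ext
    simp [cyl]
  rw [hcyl]
  exact MeasurableSet.iInter fun i => measurable_pi_apply _ (measurableSet_singleton _)

variable [Fintype A]

lemma measure_eq_sum_cyl_of_determined {C : Set (ℕ → A)} {N : ℕ}
    (hC : ∀ x y : ℕ → A, (∀ i < N, x i = y i) → x ∈ C → y ∈ C) :
    μ C = ∑ w ∈ Finset.univ.filter (fun w : Fin N → A => cyl w ⊆ C), μ (cyl w) := by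
  conv_lhs => rw [eq_iUnion_cyl_of_determined hC]
  rw [← measure_biUnion_finset (fun w _ v _ hwv => pairwise_disjoint_cyl N hwv)
    (fun w _ => measurableSet_cyl w)]
  simp

lemma ext_of_cyl [IsFiniteMeasure μ] {ν : Measure (ℕ → A)}
    (h : ∀ N (w : Fin N → A), μ (cyl w) = ν (cyl w)) : μ = ν := by
  refine ext_of_generate_finite _ generateFrom_measurableCylinders.symm
    isPiSystem_measurableCylinders (fun t ht => ?_) (by simpa [cyl] using h 0 Fin.elim0)
  obtain ⟨I, S, -, rfl⟩ := (mem_measurableCylinders t).1 ht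
  have hdet : ∀ x y : ℕ → A, (∀ i < I.sup id + 1, x i = y i) →
      x ∈ cylinder I S → y ∈ cylinder I S := by
    intro x y hxy hx
    have hres : I.restrict x = I.restrict y :=
      funext fun i => hxy i (Nat.lt_succ_of_le (Finset.le_sup (f := id) i.2))
    simpa only [mem_cylinder, hres] using hx
  rw [measure_eq_sum_cyl_of_determined hdet, measure_eq_sum_cyl_of_determined (μ := ν) hdet]
  exact Finset.sum_congr rfl fun w _ => h _ w

lemma integral_eq_sum_setIntegral_cyl {E : Type*} [NormedAddCommGroup E] [NormedSpace ℝ E]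
    (n : ℕ) {F : (ℕ → A) → E} (hF : ∀ w : Fin n → A, IntegrableOn F (cyl w) μ) :
    ∫ x, F x ∂μ = ∑ w : Fin n → A, ∫ x in cyl w, F x ∂μ := by
  rw [← integral_iUnion_fintype measurableSet_cyl (pairwise_disjoint_cyl n) hF, iUnion_cyl,
    Measure.restrict_univ]

lemma sum_measureReal_cyl [IsProbabilityMeasure μ] (n : ℕ) :
    ∑ w : Fin n → A, μ.real (cyl w) = 1 := by
  simpa using (integral_eq_sum_setIntegral_cyl (μ := μ) n fun _ =>
    (integrable_const (1 : ℝ)).integrableOn).symm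

lemma IsBernoulli.map_restrict_cyl [IsFiniteMeasure μ] (hμ : IsBernoulli μ) {n : ℕ}
    (w : Fin n → A) :
    (μ.restrict (cyl w)).map shift^[n] = μ (cyl w) • μ := by
  have hσ := (measurable_shift (A := A)).iterate n
  refine ext_of_cyl fun N v => ?_
  rw [Measure.map_apply hσ (measurableSet_cyl v),
    Measure.restrict_apply (hσ (measurableSet_cyl v)), Measure.smul_apply, smul_eq_mul, ← hμ,
    inter_comm]
  exact congrArg μ (ext fun x => (mem_cyl_append w v x).symm)

lemma IsBernoulli.setIntegral_cyl_comp_shift_iterate [IsFiniteMeasure μ]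
    {E : Type*} [NormedAddCommGroup E] [NormedSpace ℝ E] (hμ : IsBernoulli μ) {n : ℕ}
    (w : Fin n → A) {F : (ℕ → A) → E} (hF : AEStronglyMeasurable F μ) :
    ∫ x in cyl w, F (shift^[n] x) ∂μ = μ.real (cyl w) • ∫ y, F y ∂μ := by
  have hσ : AEMeasurable shift^[n] (μ.restrict (cyl w)) :=
    ((measurable_shift (A := A)).iterate n).aemeasurable
  rw [← integral_map hσ (by rw [hμ.map_restrict_cyl]; exact hF.smul_measure _),
    hμ.map_restrict_cyl, integral_smul_measure, measureReal_def]

lemma IsBernoulli.integrableOn_cyl_comp_shift_iterate [IsFiniteMeasure μ]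
    {E : Type*} [NormedAddCommGroup E] (hμ : IsBernoulli μ) {n : ℕ}
    (w : Fin n → A) {F : (ℕ → A) → E} (hF : Integrable F μ) :
    IntegrableOn (fun x => F (shift^[n] x)) (cyl w) μ := by
  have hσ : AEMeasurable shift^[n] (μ.restrict (cyl w)) :=
    ((measurable_shift (A := A)).iterate n).aemeasurable
  have hmap := hμ.map_restrict_cyl w
  refine (integrable_map_measure (hmap ▸ hF.1.smul_measure _) hσ).1 ?_
  rw [hmap]
  exact hF.smul_measure (measure_ne_top μ _)

lemma IsBernoulli.integral_comp_shift_iterate_mul [IsFiniteMeasure μ] (hμ : IsBernoulli μ)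
    (n : ℕ) (hf : Integrable f μ) (hg : Measurable g) (hgC : ∀ x, ‖g x‖ ≤ C) :
    ∫ x, f (shift^[n] x) * g x ∂μ = ∫ y, f y * transferPow μ n g y ∂μ := by
  have hfg := integrable_mul_comp_concat hf hg hgC (n := n)
  have hcyl : ∀ w : Fin n → A, EqOn (fun x => f (shift^[n] x) * g (concat w (shift^[n] x)))
      (fun x => f (shift^[n] x) * g x) (cyl w) :=
    fun w x hx => by simp only [concat_shift_iterate_of_mem_cyl hx]
  calc ∫ x, f (shift^[n] x) * g x ∂μ
      = ∑ w : Fin n → A, ∫ x in cyl w, f (shift^[n] x) * g (concat w (shift^[n] x)) ∂μ := by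
        rw [integral_eq_sum_setIntegral_cyl n fun w =>
          (hμ.integrableOn_cyl_comp_shift_iterate w (hfg w)).congr_fun (hcyl w)
            (measurableSet_cyl w)]
        exact Finset.sum_congr rfl fun w _ =>
          (setIntegral_congr_fun (measurableSet_cyl w) (hcyl w)).symm
    _ = ∑ w : Fin n → A, μ.real (cyl w) • ∫ y, f y * g (concat w y) ∂μ :=
        Finset.sum_congr rfl fun w _ => hμ.setIntegral_cyl_comp_shift_iterate w (hfg w).1
    _ = ∫ y, f y * transferPow μ n g y ∂μ := by
        simp only [transferPow, Finset.mul_sum, mul_smul_comm]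
        rw [integral_finsetSum _ fun w _ => (hfg w).fun_smul _]
        simp only [integral_smul]

lemma IsBernoulli.integral_transferPow [IsFiniteMeasure μ] (hμ : IsBernoulli μ) (n : ℕ)
    (hg : Measurable g) (hgC : ∀ x, ‖g x‖ ≤ C) : ∫ y, transferPow μ n g y ∂μ = ∫ x, g x ∂μ := by
  simpa using (hμ.integral_comp_shift_iterate_mul n (integrable_const (1 : 𝕜)) hg hgC).symm

end Measure

section Lipschitz

variable {m : ℕ} {θ : ℝ}

lemma dtheta_le_pow (hθ0 : 0 ≤ θ) (hθ1 : θ ≤ 1) {N : ℕ} {x y : ℕ → Fin m}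
    (h : ∀ i < N, x i = y i) : dtheta θ x y ≤ θ ^ N := by
  unfold dtheta
  split_ifs with hxy
  · positivity
  · obtain ⟨j, hj⟩ : ∃ j, x j ≠ y j := by
      by_contra! H
      exact hxy (funext H)
    refine pow_le_pow_of_le_one hθ0 hθ1 (le_csInf ⟨j, hj⟩ fun i hi => ?_)
    by_contra! hiN
    exact hi (h i hiN)

lemma dtheta_concat_le (hθ0 : 0 ≤ θ) (hθ1 : θ ≤ 1) {n : ℕ} (w : Fin n → Fin m)
    (y z : ℕ → Fin m) : dtheta θ (concat w y) (concat w z) ≤ θ ^ n :=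
  dtheta_le_pow hθ0 hθ1 fun i hi => by simp [concat, hi]

variable {𝕜 : Type*} [RCLike 𝕜] {g : (ℕ → Fin m) → 𝕜} {L : ℝ}

lemma exists_norm_le_of_dtheta_lipschitz (hθ0 : 0 ≤ θ) (hθ1 : θ ≤ 1) (hL : 0 ≤ L)
    (hLip : ∀ x y, ‖g x - g y‖ ≤ L * dtheta θ x y) : ∃ C, ∀ x, ‖g x‖ ≤ C := by
  rcases isEmpty_or_nonempty (ℕ → Fin m) with _ | ⟨⟨z⟩⟩
  · exact ⟨0, fun x => isEmptyElim x⟩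
  refine ⟨‖g z‖ + L, fun x => ?_⟩
  have hd : dtheta θ x z ≤ 1 := by
    simpa using dtheta_le_pow (N := 0) hθ0 hθ1 (x := x) (y := z) (by simp)
  have := (hLip x z).trans (mul_le_of_le_one_right hL hd)
  linarith [norm_le_norm_add_norm_sub' (g x) (g z)]

lemma measurable_of_dtheta_lipschitz (hθ0 : 0 ≤ θ) (hθ1 : θ < 1) (hL : 0 ≤ L)
    (hLip : ∀ x y, ‖g x - g y‖ ≤ L * dtheta θ x y) : Measurable g := by
  rcases isEmpty_or_nonempty (ℕ → Fin m) with _ | ⟨⟨z⟩⟩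
  · exact Subsingleton.measurable
  -- `g` is the pointwise limit of the functions `x ↦ g (concat (x|N) z)` of finitely many letters.
  have happrox : ∀ N, Measurable fun x : ℕ → Fin m => g (concat (fun i : Fin N => x i) z) :=
    fun N => (measurable_of_countable fun w : Fin N → Fin m => g (concat w z)).comp
      (measurable_pi_lambda _ fun i => measurable_pi_apply _)
  refine measurable_of_tendsto_metrizable happrox (tendsto_pi_nhds.2 fun x => ?_)
  rw [tendsto_iff_norm_sub_tendsto_zero]
  have hclose : ∀ N, dtheta θ (concat (fun i : Fin N => x i) z) x ≤ θ ^ N :=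
    fun N => dtheta_le_pow hθ0 hθ1.le fun i hi => by simp [concat, hi]
  refine squeeze_zero (fun _ => norm_nonneg _)
    (fun N => (hLip _ _).trans (mul_le_mul_of_nonneg_left (hclose N) hL)) ?_
  simpa using (tendsto_pow_atTop_nhds_zero_of_lt_one hθ0 hθ1).const_mul L

variable {μ : Measure (ℕ → Fin m)} [IsProbabilityMeasure μ]

lemma norm_transferPow_sub_transferPow_le (hθ0 : 0 ≤ θ) (hθ1 : θ ≤ 1) (hL : 0 ≤ L)
    (hLip : ∀ x y, ‖g x - g y‖ ≤ L * dtheta θ x y) (n : ℕ) (y z : ℕ → Fin m) :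
    ‖transferPow μ n g y - transferPow μ n g z‖ ≤ L * θ ^ n := by
  calc ‖transferPow μ n g y - transferPow μ n g z‖
      = ‖∑ w : Fin n → Fin m, μ.real (cyl w) • (g (concat w y) - g (concat w z))‖ := by
        simp only [transferPow, smul_sub, Finset.sum_sub_distrib]
    _ ≤ ∑ w : Fin n → Fin m, μ.real (cyl w) * (L * θ ^ n) := by
        refine norm_sum_le_of_le _ fun w _ => ?_
        rw [norm_smul, Real.norm_of_nonneg measureReal_nonneg]
        exact mul_le_mul_of_nonneg_left ((hLip _ _).trans
          (mul_le_mul_of_nonneg_left (dtheta_concat_le hθ0 hθ1 w y z) hL)) measureReal_nonneg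
    _ = L * θ ^ n := by rw [← Finset.sum_mul, sum_measureReal_cyl, one_mul]

lemma IsBernoulli.norm_transferPow_sub_integral_le (hμ : IsBernoulli μ) (hθ0 : 0 ≤ θ)
    (hθ1 : θ < 1) (hL : 0 ≤ L) (hLip : ∀ x y, ‖g x - g y‖ ≤ L * dtheta θ x y) (n : ℕ)
    (y : ℕ → Fin m) : ‖transferPow μ n g y - ∫ x, g x ∂μ‖ ≤ L * θ ^ n := by
  have hg := measurable_of_dtheta_lipschitz hθ0 hθ1 hL hLip
  obtain ⟨C, hgC⟩ := exists_norm_le_of_dtheta_lipschitz hθ0 hθ1.le hL hLip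
  have hint : Integrable (transferPow μ n g) μ := by
    simpa using integrable_mul_transferPow (integrable_const (1 : 𝕜)) hg hgC n (μ := μ)
  rw [← hμ.integral_transferPow n hg hgC]
  calc ‖transferPow μ n g y - ∫ z, transferPow μ n g z ∂μ‖
      = ‖∫ z, (transferPow μ n g y - transferPow μ n g z) ∂μ‖ := by
        rw [integral_sub (integrable_const _) hint, integral_const, probReal_univ, one_smul]
    _ ≤ L * θ ^ n := by
        simpa using norm_integral_le_of_norm_le_const (μ := μ) (ae_of_all _ fun z =>
          norm_transferPow_sub_transferPow_le hθ0 hθ1.le hL hLip n y z)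

lemma IsBernoulli.norm_integral_comp_shift_iterate_mul_sub_le (hμ : IsBernoulli μ)
    (hθ0 : 0 ≤ θ) (hθ1 : θ < 1) (hL : 0 ≤ L) (hLip : ∀ x y, ‖g x - g y‖ ≤ L * dtheta θ x y)
    {f : (ℕ → Fin m) → 𝕜} (hf : Integrable f μ) (n : ℕ) :
    ‖(∫ x, f (shift^[n] x) * g x ∂μ) - (∫ x, f x ∂μ) * ∫ x, g x ∂μ‖ ≤
      (∫ x, ‖f x‖ ∂μ) * (L * θ ^ n) := by
  have hg := measurable_of_dtheta_lipschitz hθ0 hθ1 hL hLip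
  obtain ⟨C, hgC⟩ := exists_norm_le_of_dtheta_lipschitz hθ0 hθ1.le hL hLip
  have hcentered : (∫ x, f (shift^[n] x) * g x ∂μ) - (∫ x, f x ∂μ) * ∫ x, g x ∂μ
      = ∫ y, f y * (transferPow μ n g y - ∫ x, g x ∂μ) ∂μ := by
    simp_rw [mul_sub]
    rw [hμ.integral_comp_shift_iterate_mul n hf hg hgC,
      integral_sub (integrable_mul_transferPow hf hg hgC n) (hf.mul_const _), integral_mul_const]
  rw [hcentered, ← integral_mul_const]
  refine norm_integral_le_of_norm_le (hf.norm.mul_const _) (ae_of_all _ fun y => ?_)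
  rw [norm_mul]
  exact mul_le_mul_of_nonneg_left (hμ.norm_transferPow_sub_integral_le hθ0 hθ1 hL hLip n y)
    (norm_nonneg _)

end Lipschitz

end ShiftSpace

theorem base_exponential_mixing_general (k : ℕ) (θ : ℝ) (hθ0 : 0 < θ) (hθ1 : θ < 1)
    (μ : Measure (ℕ → Fin (2 * k))) [IsProbabilityMeasure μ]
    (hμ : ∀ (n : ℕ) (α : Fin n → Fin (2 * k)),
      μ {x | ∀ i : Fin n, x i = α i} = ((1 : ℝ≥0∞) / (2 * k)) ^ n)
    (f g : (ℕ → Fin (2 * k)) → ℂ) (hf2 : MemLp f 2 μ)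
    (L : ℝ) (hL : 0 ≤ L) (hLip : ∀ x y, ‖g x - g y‖ ≤ L * dtheta θ x y)
    (n : ℕ) :
    ‖(∫ x, f (shift^[n] x) * g x ∂μ) - (∫ x, f x ∂μ) * ∫ x, g x ∂μ‖ ≤
      Real.sqrt (∫ x, ‖f x‖ ^ 2 ∂μ) * L * θ ^ n := by
  have hB : ShiftSpace.IsBernoulli μ := ShiftSpace.isBernoulli_of_measure_cyl_eq_pow hμ
  calc _ ≤ (∫ x, ‖f x‖ ∂μ) * (L * θ ^ n) :=
        hB.norm_integral_comp_shift_iterate_mul_sub_le hθ0.le hθ1 hL hLip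
          (hf2.integrable one_le_two) n
    _ ≤ √(∫ x, ‖f x‖ ^ 2 ∂μ) * L * θ ^ n := by
        rw [mul_assoc]
        exact mul_le_mul_of_nonneg_right (integral_norm_le_sqrt_integral_norm_sq hf2)
          (by positivity)

/-- exponential mixing of the measure of maximal entropy on the base:
for `f ∈ L²(μ)` and `g` Lipschitz for `d_θ` with constant `L`,
`|∫ (f∘σⁿ) g dμ − ∫f dμ ∫g dμ| ≤ ‖f‖_{L²(μ)} L θⁿ`. -/
theorem base_exponential_mixing (k : ℕ) (hk : 2 ≤ k) (θ : ℝ) (hθ0 : 0 < θ) (hθ1 : θ < 1)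
    (μ : Measure (ℕ → Fin (2 * k))) [IsProbabilityMeasure μ]
    (hμ : ∀ (n : ℕ) (α : Fin n → Fin (2 * k)),
      μ {x | ∀ i : Fin n, x i = α i} = ((1 : ℝ≥0∞) / (2 * k)) ^ n)
    (f g : (ℕ → Fin (2 * k)) → ℂ) (hfm : Measurable f) (hf2 : MemLp f 2 μ)
    (L : ℝ) (hL : 0 ≤ L) (hLip : ∀ x y, ‖g x - g y‖ ≤ L * dtheta θ x y)
    (n : ℕ) (hn : 1 ≤ n) :
    ‖(∫ x, f (shift^[n] x) * g x ∂μ) - (∫ x, f x ∂μ) * ∫ x, g x ∂μ‖ ≤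
      Real.sqrt (∫ x, ‖f x‖ ^ 2 ∂μ) * L * θ ^ n :=
  base_exponential_mixing_general k θ hθ0 hθ1 μ hμ f g hf2 L hL hLip n
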